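/- Let k be an algebraically closed field of odd characteristic p, let n be an integer with p | (n−1) (so n ≥ 4), and let F ∈ k[t] be monic of degree n. Set f₁ = 2x^(n−1) + x − t^(n−1) + t^(n−2) and f₂ = F(t) − f₁ in k[x,t]. Then both the degree-(n−1) homogenization of f₁ and the degree-n homogenization of f₂ define smooth projective plane curves: each homogenization has no common zero with its three partial derivatives in k³ ∖ {(0,0,0)}. -/

import Mathlib

/-!
Since `p ∣ n - 1`, the coefficient `n - 1` vanishes in `k`, so the `X`-derivatives of the two
homogenizations are `Z^(n-2)` and `-Z^(n-1)`: a singular point lies on the line `Z = 0`.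
On that line the `Z`-derivative of the first curve, resp. the equation of the second one
(where `F` contributes `T^n`), forces `T = 0`; finally the leading term `2X^(n-1)` of the
first equation, resp. of the `Z`-derivative of the second, forces `X = 0`, since `p ≠ 2`.
-/

open MvPolynomial

/-- The degree-`d` homogenization of a two-variable polynomial `f(x,t)`
(variable `0` is `x`, variable `1` is `t`) as a polynomial in three variables
`X, T, Z` (variable `0` is `X`, `1` is `T`, `2` is `Z`): each monomial
`c·x^i·t^j` of `f` becomes `c·X^i·T^j·Z^(d−i−j)`.  For `d` the total degree of
`f` this is `Z^d·f(X/Z, T/Z)`. -/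
noncomputable def homogenize {K : Type*} [CommSemiring K] (d : ℕ)
    (f : MvPolynomial (Fin 2) K) : MvPolynomial (Fin 3) K :=
  f.support.sum fun m =>
    MvPolynomial.monomial
      (Finsupp.single (0 : Fin 3) (m 0) + Finsupp.single (1 : Fin 3) (m 1) +
        Finsupp.single (2 : Fin 3) (d - (m 0 + m 1)))
      (MvPolynomial.coeff m f)

noncomputable def homogenizeExponent (d : ℕ) (m : Fin 2 →₀ ℕ) : Fin 3 →₀ ℕ :=
  Finsupp.single 0 (m 0) + Finsupp.single 1 (m 1) + Finsupp.single 2 (d - (m 0 + m 1))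

section Homogenize

variable {K : Type*} [CommSemiring K] (d : ℕ)

noncomputable def homogenizeₗ : MvPolynomial (Fin 2) K →ₗ[K] MvPolynomial (Fin 3) K :=
  AddMonoidAlgebra.mapDomainLinearMap K K (homogenizeExponent d)

theorem homogenizeₗ_apply (f : MvPolynomial (Fin 2) K) : homogenizeₗ d f = homogenize d f := by
  show AddMonoidAlgebra.mapDomain _ f = _
  rw [homogenize, AddMonoidAlgebra.mapDomain, Finsupp.mapDomain,
    AddMonoidAlgebra.ofCoeff_finsuppSum, Finsupp.sum]
  rfl

theorem homogenize_add (f g : MvPolynomial (Fin 2) K) :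
    homogenize d (f + g) = homogenize d f + homogenize d g := by
  simp only [← homogenizeₗ_apply, map_add]

theorem homogenize_sum {ι : Type*} (s : Finset ι) (f : ι → MvPolynomial (Fin 2) K) :
    homogenize d (∑ i ∈ s, f i) = ∑ i ∈ s, homogenize d (f i) := by
  simp only [← homogenizeₗ_apply, map_sum]

theorem homogenize_C_mul (c : K) (f : MvPolynomial (Fin 2) K) :
    homogenize d (C c * f) = C c * homogenize d f := by
  simp only [← homogenizeₗ_apply, C_mul', map_smul]

theorem homogenize_ofNat_mul (m : ℕ) [m.AtLeastTwo] (f : MvPolynomial (Fin 2) K) :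
    homogenize d (ofNat(m) * f) = ofNat(m) * homogenize d f := by
  simpa only [map_ofNat] using homogenize_C_mul d (ofNat(m) : K) f

theorem homogenize_monomial (m : Fin 2 →₀ ℕ) (c : K) :
    homogenize d (monomial m c) = monomial (homogenizeExponent d m) c := by
  rw [← homogenizeₗ_apply, homogenizeₗ, ← single_eq_monomial,
    AddMonoidAlgebra.mapDomainLinearMap_single, single_eq_monomial]

theorem homogenize_X_pow (i : Fin 2) (a : ℕ) :
    homogenize d (X i ^ a : MvPolynomial (Fin 2) K) = X i.castSucc ^ a * X 2 ^ (d - a) := by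
  rw [X_pow_eq_monomial, homogenize_monomial, X_pow_eq_monomial, X_pow_eq_monomial,
    monomial_mul, one_mul]
  congr 1
  fin_cases i <;> simp [homogenizeExponent]

theorem homogenize_X (i : Fin 2) :
    homogenize d (X i : MvPolynomial (Fin 2) K) = X i.castSucc * X 2 ^ (d - 1) := by
  simpa using homogenize_X_pow d i 1

theorem homogenize_aeval_X_one (F : Polynomial K) :
    homogenize d (Polynomial.aeval (X 1 : MvPolynomial (Fin 2) K) F) =
      ∑ k ∈ F.support, C (F.coeff k) * X 1 ^ k * X 2 ^ (d - k) := by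
  conv_lhs => rw [F.as_sum_support_C_mul_X_pow]
  simp [homogenize_sum, homogenize_C_mul, homogenize_X_pow, mul_assoc]

end Homogenize

theorem homogenize_sub {K : Type*} [CommRing K] (d : ℕ) (f g : MvPolynomial (Fin 2) K) :
    homogenize d (f - g) = homogenize d f - homogenize d g := by
  simp only [← homogenizeₗ_apply, map_sub]

section AevalXOne

variable {K : Type*} [CommSemiring K] (d : ℕ) (F : Polynomial K) (v : Fin 3 → K)

theorem pderiv_zero_homogenize_aeval_X_one :
    pderiv 0 (homogenize d (Polynomial.aeval (X 1 : MvPolynomial (Fin 2) K) F)) = 0 := by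
  simp [homogenize_aeval_X_one, pderiv_X]

theorem eval_homogenize_aeval_X_one_of_eq_zero (hF : F.natDegree ≤ d) (hv : v 2 = 0) :
    eval v (homogenize d (Polynomial.aeval (X 1 : MvPolynomial (Fin 2) K) F)) =
      F.coeff d * v 1 ^ d := by
  rw [homogenize_aeval_X_one, map_sum, Finset.sum_eq_single d]
  · simp
  · intro k hk hkd
    have hkd : k < d := (Polynomial.le_natDegree_of_mem_supp k hk |>.trans hF).lt_of_ne hkd
    simp [hv, Nat.sub_ne_zero_of_lt hkd]
  · intro hd
    simp [Polynomial.notMem_support_iff.mp hd]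

theorem eval_pderiv_two_homogenize_aeval_X_one_of_eq_zero (hd : 2 ≤ d) (hv₁ : v 1 = 0)
    (hv₂ : v 2 = 0) :
    eval v (pderiv 2 (homogenize d (Polynomial.aeval (X 1 : MvPolynomial (Fin 2) K) F))) = 0 := by
  rw [homogenize_aeval_X_one, map_sum, map_sum]
  refine Finset.sum_eq_zero fun k _ => ?_
  rcases Nat.eq_zero_or_pos k with rfl | hk
  · simp [pderiv_X, hv₂, show d - 1 ≠ 0 by omega]
  · simp [pderiv_X, hv₁, hk.ne']

end AevalXOne

theorem pderiv_ofNat {σ R : Type*} [CommSemiring R] (i : σ) (m : ℕ) [m.AtLeastTwo] :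
    pderiv i (ofNat(m) : MvPolynomial σ R) = 0 := by
  rw [← map_ofNat C m, pderiv_C]

def IsSingularPoint {σ K : Type*} [CommSemiring K] (G : MvPolynomial σ K) (v : σ → K) : Prop :=
  eval v G = 0 ∧ ∀ j, eval v (pderiv j G) = 0

section Curves

variable {K : Type*} [CommRing K] [IsDomain K] {n : ℕ} {v : Fin 3 → K}

theorem eq_zero_of_isSingularPoint_homogenize_sub_one (hn : 4 ≤ n)
    (hchar : ((n - 1 : ℕ) : K) = 0) (h2 : (2 : K) ≠ 0)
    (hv : IsSingularPoint (homogenize (n - 1)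
      (2 * X 0 ^ (n - 1) + X 0 - X 1 ^ (n - 1) + X 1 ^ (n - 2) : MvPolynomial (Fin 2) K)) v) :
    v = 0 := by
  have hG : homogenize (n - 1)
      (2 * X 0 ^ (n - 1) + X 0 - X 1 ^ (n - 1) + X 1 ^ (n - 2) : MvPolynomial (Fin 2) K) =
        2 * X 0 ^ (n - 1) + X 0 * X 2 ^ (n - 2) - X 1 ^ (n - 1) + X 1 ^ (n - 2) * X 2 := by
    simp [homogenize_add, homogenize_sub, homogenize_ofNat_mul, homogenize_X_pow, homogenize_X,
      show n - 1 - 1 = n - 2 by omega, show n - 1 - (n - 2) = 1 by omega]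
  obtain ⟨hG, hdG⟩ := hG ▸ hv
  have hZ : v 2 = 0 := by
    simpa [pderiv_X, pderiv_ofNat, hchar, show n - 2 ≠ 0 by omega] using hdG 0
  have hT : v 1 = 0 := by
    simpa [pderiv_X, pderiv_ofNat, hZ, show n - 2 ≠ 0 by omega, show n - 2 - 1 ≠ 0 by omega]
      using hdG 2
  have hX : v 0 = 0 := by
    simpa [hZ, hT, h2, show n - 1 ≠ 0 by omega, show n - 2 ≠ 0 by omega] using hG
  ext i
  fin_cases i <;> assumption

theorem eq_zero_of_isSingularPoint_homogenize_aeval_sub (hn : 2 ≤ n)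
    (hchar : ((n - 1 : ℕ) : K) = 0) (h2 : (2 : K) ≠ 0) {F : Polynomial K} (hF : F.Monic)
    (hdeg : F.natDegree = n)
    (hv : IsSingularPoint (homogenize n (Polynomial.aeval (X 1 : MvPolynomial (Fin 2) K) F -
      (2 * X 0 ^ (n - 1) + X 0 - X 1 ^ (n - 1) + X 1 ^ (n - 2)))) v) :
    v = 0 := by
  have hG : homogenize n (Polynomial.aeval (X 1 : MvPolynomial (Fin 2) K) F -
      (2 * X 0 ^ (n - 1) + X 0 - X 1 ^ (n - 1) + X 1 ^ (n - 2))) =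
        homogenize n (Polynomial.aeval (X 1 : MvPolynomial (Fin 2) K) F) -
          (2 * X 0 ^ (n - 1) * X 2 + X 0 * X 2 ^ (n - 1) - X 1 ^ (n - 1) * X 2 +
            X 1 ^ (n - 2) * X 2 ^ 2) := by
    simp [homogenize_add, homogenize_sub, homogenize_ofNat_mul, homogenize_X_pow, homogenize_X,
      mul_assoc, show n - (n - 1) = 1 by omega, show n - (n - 2) = 2 by omega]
  obtain ⟨hG, hdG⟩ := hG ▸ hv
  have hZ : v 2 = 0 := by
    simpa [pderiv_X, pderiv_ofNat, pderiv_zero_homogenize_aeval_X_one, hchar,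
      show n - 1 ≠ 0 by omega] using hdG 0
  have hT : v 1 = 0 := by
    simpa [eval_homogenize_aeval_X_one_of_eq_zero n F v hdeg.le hZ, hdeg ▸ hF.coeff_natDegree,
      hZ, show n - 1 ≠ 0 by omega, show n ≠ 0 by omega] using hG
  have hX : v 0 = 0 := by
    simpa [pderiv_X, pderiv_ofNat, eval_pderiv_two_homogenize_aeval_X_one_of_eq_zero n F v hn hT hZ,
      hZ, hT, hchar, h2, show n - 1 ≠ 0 by omega] using hdG 2
  ext i
  fin_cases i <;> assumption

end Curves

theorem three_le_of_charP_of_odd (R : Type*) [NonAssocSemiring R] [Nontrivial R] {p : ℕ}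
    [CharP R p] (hodd : Odd p) : 3 ≤ p := by
  obtain ⟨m, rfl⟩ := hodd
  have : 2 * m + 1 ≠ 1 := CharP.char_ne_one R _
  omega

theorem stmt_9_general (k : Type*) [Field k] (p : ℕ) (hp : CharP k p)
    (hodd : Odd p) (n : ℕ) (hn : 2 ≤ n) (hpn : p ∣ (n - 1))
    (F : Polynomial k) (hF : F.Monic) (hdeg : F.natDegree = n)
    (f₁ f₂ : MvPolynomial (Fin 2) k)
    (hf₁ : f₁ = 2 * MvPolynomial.X 0 ^ (n - 1) + MvPolynomial.X 0 -
        MvPolynomial.X 1 ^ (n - 1) + MvPolynomial.X 1 ^ (n - 2))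
    (hf₂ : f₂ =
        Polynomial.aeval (MvPolynomial.X 1 : MvPolynomial (Fin 2) k) F - f₁) :
    (∀ v : Fin 3 → k, v ≠ 0 →
      ¬ (MvPolynomial.eval v (homogenize (n - 1) f₁) = 0 ∧
          ∀ j : Fin 3,
            MvPolynomial.eval v
              (MvPolynomial.pderiv j (homogenize (n - 1) f₁)) = 0)) ∧
    (∀ v : Fin 3 → k, v ≠ 0 →
      ¬ (MvPolynomial.eval v (homogenize n f₂) = 0 ∧
          ∀ j : Fin 3,
            MvPolynomial.eval v
              (MvPolynomial.pderiv j (homogenize n f₂)) = 0)) := by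
  have hp3 : 3 ≤ p := three_le_of_charP_of_odd k hodd
  have hn4 : 4 ≤ n := by
    have := Nat.le_of_dvd (by omega) hpn
    omega
  have hchar : ((n - 1 : ℕ) : k) = 0 := (CharP.cast_eq_zero_iff k p _).mpr hpn
  have h2 : (2 : k) ≠ 0 := Ring.two_ne_zero (by rw [ringChar.eq k p]; omega)
  subst hf₂ hf₁
  exact ⟨fun v hv hsing => hv (eq_zero_of_isSingularPoint_homogenize_sub_one hn4 hchar h2 hsing),
    fun v hv hsing =>
      hv (eq_zero_of_isSingularPoint_homogenize_aeval_sub hn hchar h2 hF hdeg hsing)⟩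

/-- Over an algebraically closed field `k` of odd characteristic
`p`, with `p ∣ (n−1)` (so `n ≥ 4`) and `F ∈ k[t]` monic of degree `n`, setting
`f₁ = 2x^(n−1) + x − t^(n−1) + t^(n−2)` and `f₂ = F(t) − f₁`, both the
degree-`(n−1)` homogenization of `f₁` and the degree-`n` homogenization of
`f₂` define smooth projective plane curves: neither has a common zero with its
three partial derivatives in `k³ ∖ {0}`. -/
theorem stmt_9 (k : Type*) [Field k] [IsAlgClosed k] (p : ℕ) (hp : CharP k p)
    (hodd : Odd p) (n : ℕ) (hn : 2 ≤ n) (hpn : p ∣ (n - 1))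
    (F : Polynomial k) (hF : F.Monic) (hdeg : F.natDegree = n)
    (f₁ f₂ : MvPolynomial (Fin 2) k)
    (hf₁ : f₁ = 2 * MvPolynomial.X 0 ^ (n - 1) + MvPolynomial.X 0 -
        MvPolynomial.X 1 ^ (n - 1) + MvPolynomial.X 1 ^ (n - 2))
    (hf₂ : f₂ =
        Polynomial.aeval (MvPolynomial.X 1 : MvPolynomial (Fin 2) k) F - f₁) :
    (∀ v : Fin 3 → k, v ≠ 0 →
      ¬ (MvPolynomial.eval v (homogenize (n - 1) f₁) = 0 ∧
          ∀ j : Fin 3,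
            MvPolynomial.eval v
              (MvPolynomial.pderiv j (homogenize (n - 1) f₁)) = 0)) ∧
    (∀ v : Fin 3 → k, v ≠ 0 →
      ¬ (MvPolynomial.eval v (homogenize n f₂) = 0 ∧
          ∀ j : Fin 3,
            MvPolynomial.eval v
              (MvPolynomial.pderiv j (homogenize n f₂)) = 0)) :=
  stmt_9_general k p hp hodd n hn hpn F hF hdeg f₁ f₂ hf₁ hf₂
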